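/- Let θ ∈ (0, 1/2), let f : [0,∞) → [0,∞) be continuous, let a : [0,1] → [0,∞) be continuous with α = ∫₀¹ a(t) dt satisfying 0 < α < 1, and set β = ∫_θ^{1−θ} a(t) dt. Define (Au)(t) = ∫₀¹ ( G(t,s) + (1/(1-α)) ∫₀¹ a(τ) G(τ,s) dτ ) f(u(s)) ds. Suppose δ > 0 satisfies δ·(θ⁶/36)·((1−α+β)²/(1−α))·(1−2θ)·(1/2 + θ − θ²) ≥ 1, and ρ̂ > 0 is such that f(v) ≥ δ v for all v > ρ̂. Then for every continuous nonnegative u : [0,1] → ℝ with min_{t∈[θ,1−θ]} u(t) ≥ θ³(1−α+β)‖u‖ and θ³(1−α+β)‖u‖ ≥ ρ̂ (sup norm ‖·‖), one has ‖Au‖ ≥ ‖u‖. -/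

import Mathlib

/-- The Green's function of the fourth-order problem. -/
noncomputable def G (t s : ℝ) : ℝ :=
  if s ≤ t then (t ^ 3 * (1 - s) ^ 2 - (t - s) ^ 3) / 6
  else t ^ 3 * (1 - s) ^ 2 / 6

/-- The sup norm on `[0,1]` of a function `u : ℝ → ℝ`. -/
noncomputable def supNorm (u : ℝ → ℝ) : ℝ := ⨆ t : Set.Icc (0 : ℝ) 1, |u t|

/-!
Both terms of the kernel of `A` dominate a multiple of `s (1 - s)² / 6`. Indeed
`G t s ≥ t³ s (1 - s)² / 6`, so integrating against `a` over `[θ, 1 - θ]` gives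
`∫ a(τ) G(τ, s) dτ ≥ θ³ β s (1 - s)² / 6`, and the kernel at `t = θ` is at least
`θ³ (1 - α + β) / (1 - α) · s (1 - s)² / 6`. On `[θ, 1 - θ]` the hypotheses on `u` give
`f (u s) ≥ δ θ³ (1 - α + β) ‖u‖`. Since `∫_θ^{1-θ} s (1 - s)² / 6 ds = (1 - 2θ)(1/2 + θ - θ²) / 36`,
the choice of `δ` yields `Au θ ≥ ‖u‖`, and `Au θ ≤ ‖Au‖` because `Au` is continuous.
-/

open Set Function intervalIntegral
open MeasureTheory (volume ae_restrict_mem)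

lemma G_eq_max (t s : ℝ) : G t s = (t ^ 3 * (1 - s) ^ 2 - max (t - s) 0 ^ 3) / 6 := by
  unfold G
  split_ifs with h
  · rw [max_eq_left (by linarith)]
  · rw [max_eq_right (by linarith)]; ring

lemma continuous_G : Continuous (uncurry G) := by
  simp only [uncurry_def, G_eq_max]
  fun_prop

lemma cube_mul_le_G {t s : ℝ} (ht : t ∈ Icc (0 : ℝ) 1) (hs : s ∈ Icc (0 : ℝ) 1) :
    t ^ 3 * (s * (1 - s) ^ 2 / 6) ≤ G t s := by
  obtain ⟨ht0, ht1⟩ := ht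
  obtain ⟨hs0, hs1⟩ := hs
  have hmax : max (t - s) 0 ≤ t * (1 - s) := max_le (by nlinarith) (by positivity)
  have hcube := pow_le_pow_left₀ (le_max_right _ _) hmax 3
  rw [G_eq_max]
  nlinarith

lemma G_nonneg {t s : ℝ} (ht : t ∈ Icc (0 : ℝ) 1) (hs : s ∈ Icc (0 : ℝ) 1) :
    0 ≤ G t s :=
  le_trans (by have := ht.1; have := hs.1; positivity) (cube_mul_le_G ht hs)

lemma integral_mul_one_sub_sq_div_six (θ : ℝ) :
    ∫ s in θ..(1 - θ), s * (1 - s) ^ 2 / 6 = (1 - 2 * θ) * (1 / 2 + θ - θ ^ 2) / 36 := by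
  have hderiv (s : ℝ) :
      HasDerivAt (fun x : ℝ => x ^ 2 / 12 - x ^ 3 / 9 + x ^ 4 / 24) (s * (1 - s) ^ 2 / 6) s := by
    have h : HasDerivAt (fun x : ℝ => x ^ 2 / 12 - x ^ 3 / 9 + x ^ 4 / 24) _ s :=
      (((hasDerivAt_pow 2 s).div_const 12).sub ((hasDerivAt_pow 3 s).div_const 9)).add
        ((hasDerivAt_pow 4 s).div_const 24)
    convert h using 1
    push_cast
    ring
  rw [integral_eq_sub_of_hasDerivAt (fun s _ => hderiv s)
    (Continuous.intervalIntegrable (by fun_prop) _ _)]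
  ring

lemma continuous_integral_mul_of_continuousOn {k : ℝ → ℝ → ℝ}
    (hk : Continuous (uncurry k)) {g : ℝ → ℝ} {p q : ℝ} (hpq : p ≤ q)
    (hg : ContinuousOn g (Icc p q)) :
    Continuous fun x => ∫ y in p..q, k x y * g y := by
  -- Replace `g` by its constant extension outside `[p, q]`, which does not change the integrals.
  set g' : ℝ → ℝ := fun y => g (projIcc p q hpq y)
  have hg' : Continuous g' :=
    hg.comp_continuous (continuous_subtype_val.comp continuous_projIcc) fun y =>
      (projIcc p q hpq y).2
  have heq (x : ℝ) : ∫ y in p..q, k x y * g y = ∫ y in p..q, k x y * g' y := by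
    refine integral_congr fun y hy => ?_
    rw [uIcc_of_le hpq] at hy
    simp only [g', projIcc_of_mem hpq hy]
  simp_rw [heq]
  exact continuous_parametric_intervalIntegral_of_continuous' (by fun_prop) p q

lemma abs_le_supNorm {u : ℝ → ℝ} (hu : ContinuousOn u (Icc 0 1)) {t : ℝ}
    (ht : t ∈ Icc (0 : ℝ) 1) : |u t| ≤ supNorm u :=
  le_ciSup (isCompact_range (continuous_abs.comp hu.domRestrict)).bddAbove
    (⟨t, ht⟩ : Icc (0 : ℝ) 1)

lemma supNorm_nonneg (u : ℝ → ℝ) : 0 ≤ supNorm u :=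
  Real.iSup_nonneg fun _ => abs_nonneg _

lemma mul_le_of_forall_lt_of_continuousOn {f : ℝ → ℝ} (hf : ContinuousOn f (Ici 0))
    {δ ρ : ℝ} (hfδ : ∀ w, ρ < w → δ * w ≤ f w) {v : ℝ} (hv : 0 ≤ v) (hρv : ρ ≤ v) :
    δ * v ≤ f v := by
  rcases hρv.lt_or_eq with hlt | rfl
  · exact hfδ v hlt
  · refine ContinuousWithinAt.closure_le (s := Ioi ρ) (by simp) (by fun_prop) ?_ hfδ
    exact (hf ρ hv).mono fun w hw => hv.trans (le_of_lt hw)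

section GreenKernel

variable {a : ℝ → ℝ}

noncomputable def greenKernel (a : ℝ → ℝ) (t s : ℝ) : ℝ :=
  G t s + (1 / (1 - ∫ τ in (0 : ℝ)..1, a τ)) * ∫ τ in (0 : ℝ)..1, a τ * G τ s

lemma continuous_greenKernel (ha : ContinuousOn a (Icc 0 1)) :
    Continuous (uncurry (greenKernel a)) := by
  have hint : Continuous fun s => ∫ τ in (0 : ℝ)..1, a τ * G τ s := by
    simp_rw [mul_comm (a _)]
    exact continuous_integral_mul_of_continuousOn (k := fun s τ => G τ s)
      (continuous_G.comp continuous_swap) zero_le_one ha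
  exact continuous_G.add (continuous_const.mul (hint.comp continuous_snd))

lemma intervalIntegrable_mul_G (ha : ContinuousOn a (Icc 0 1)) (s : ℝ) :
    IntervalIntegrable (fun τ => a τ * G τ s) volume 0 1 :=
  (ha.mul (continuous_G.comp (.prodMk_left s)).continuousOn).intervalIntegrable_of_Icc zero_le_one

lemma integral_mul_G_nonneg (ha0 : ∀ t ∈ Icc (0 : ℝ) 1, 0 ≤ a t) {s : ℝ}
    (hs : s ∈ Icc (0 : ℝ) 1) : 0 ≤ ∫ τ in (0 : ℝ)..1, a τ * G τ s :=
  integral_nonneg zero_le_one fun τ hτ => mul_nonneg (ha0 τ hτ) (G_nonneg hτ hs)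

lemma cube_mul_integral_le_integral_mul_G (ha : ContinuousOn a (Icc 0 1))
    (ha0 : ∀ t ∈ Icc (0 : ℝ) 1, 0 ≤ a t) {θ s : ℝ} (hθ0 : 0 ≤ θ) (hθ : θ ≤ 1 - θ)
    (hs : s ∈ Icc (0 : ℝ) 1) :
    θ ^ 3 * (s * (1 - s) ^ 2 / 6) * ∫ τ in θ..(1 - θ), a τ ≤
      ∫ τ in (0 : ℝ)..1, a τ * G τ s := by
  have hsub : uIcc θ (1 - θ) ⊆ Icc 0 1 := by
    rw [uIcc_of_le hθ]
    exact Icc_subset_Icc hθ0 (by linarith)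
  calc θ ^ 3 * (s * (1 - s) ^ 2 / 6) * ∫ τ in θ..(1 - θ), a τ
      = ∫ τ in θ..(1 - θ), a τ * (θ ^ 3 * (s * (1 - s) ^ 2 / 6)) := by
        rw [integral_mul_const, mul_comm]
    _ ≤ ∫ τ in θ..(1 - θ), a τ * G τ s := by
        refine integral_mono_on hθ ((ha.mono hsub).mul continuousOn_const).intervalIntegrable
          ((intervalIntegrable_mul_G ha s).mono_set (by rwa [uIcc_of_le zero_le_one]))
          fun τ hτ => ?_
        have hτ01 : τ ∈ Icc (0 : ℝ) 1 := ⟨by linarith [hτ.1], by linarith [hτ.2]⟩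
        refine mul_le_mul_of_nonneg_left ?_ (ha0 τ hτ01)
        calc θ ^ 3 * (s * (1 - s) ^ 2 / 6)
            ≤ τ ^ 3 * (s * (1 - s) ^ 2 / 6) := by
              gcongr
              · have := hs.1; have := hs.2; positivity
              · exact hτ.1
          _ ≤ G τ s := cube_mul_le_G hτ01 hs
    _ ≤ ∫ τ in (0 : ℝ)..1, a τ * G τ s := by
        refine integral_mono_interval hθ0 hθ (by linarith) ?_ (intervalIntegrable_mul_G ha s)
        filter_upwards [ae_restrict_mem measurableSet_Ioc] with τ hτ
        exact mul_nonneg (ha0 τ (Ioc_subset_Icc_self hτ)) (G_nonneg (Ioc_subset_Icc_self hτ) hs)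

lemma greenKernel_nonneg (ha0 : ∀ t ∈ Icc (0 : ℝ) 1, 0 ≤ a t)
    (hα1 : ∫ t in (0 : ℝ)..1, a t < 1) {t s : ℝ} (ht : t ∈ Icc (0 : ℝ) 1)
    (hs : s ∈ Icc (0 : ℝ) 1) : 0 ≤ greenKernel a t s :=
  add_nonneg (G_nonneg ht hs)
    (mul_nonneg (one_div_nonneg.2 (by linarith)) (integral_mul_G_nonneg ha0 hs))

lemma cube_mul_le_greenKernel (ha : ContinuousOn a (Icc 0 1))
    (ha0 : ∀ t ∈ Icc (0 : ℝ) 1, 0 ≤ a t) (hα1 : ∫ t in (0 : ℝ)..1, a t < 1)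
    {θ s : ℝ} (hθ0 : 0 ≤ θ) (hθ : θ ≤ 1 - θ) (hs : s ∈ Icc (0 : ℝ) 1) :
    θ ^ 3 * ((1 - (∫ t in (0 : ℝ)..1, a t) + ∫ t in θ..(1 - θ), a t) /
      (1 - ∫ t in (0 : ℝ)..1, a t)) * (s * (1 - s) ^ 2 / 6) ≤ greenKernel a θ s := by
  have hG := cube_mul_le_G ⟨hθ0, by linarith⟩ hs
  have hint := cube_mul_integral_le_integral_mul_G ha ha0 hθ0 hθ hs
  have hα1' : 0 < 1 - ∫ t in (0 : ℝ)..1, a t := by linarith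
  unfold greenKernel
  calc _ = θ ^ 3 * (s * (1 - s) ^ 2 / 6) + (1 / (1 - ∫ t in (0 : ℝ)..1, a t)) *
        (θ ^ 3 * (s * (1 - s) ^ 2 / 6) * ∫ t in θ..(1 - θ), a t) := by
        field_simp
    _ ≤ _ := by gcongr

lemma integral_greenKernel_mul_ge (ha : ContinuousOn a (Icc 0 1))
    (ha0 : ∀ t ∈ Icc (0 : ℝ) 1, 0 ≤ a t) (hα1 : ∫ t in (0 : ℝ)..1, a t < 1) {g : ℝ → ℝ}
    (hg : ContinuousOn g (Icc 0 1)) (hg0 : ∀ s ∈ Icc (0 : ℝ) 1, 0 ≤ g s) {θ m : ℝ}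
    (hθ0 : 0 ≤ θ) (hθ : θ ≤ 1 - θ) (hm : 0 ≤ m) (hgm : ∀ s ∈ Icc θ (1 - θ), m ≤ g s) :
    θ ^ 3 * ((1 - (∫ t in (0 : ℝ)..1, a t) + ∫ t in θ..(1 - θ), a t) /
      (1 - ∫ t in (0 : ℝ)..1, a t)) * ((1 - 2 * θ) * (1 / 2 + θ - θ ^ 2) / 36) * m ≤
      ∫ s in (0 : ℝ)..1, greenKernel a θ s * g s := by
  have hθI : θ ∈ Icc (0 : ℝ) 1 := ⟨hθ0, by linarith⟩
  have hsub : Icc θ (1 - θ) ⊆ Icc 0 1 := Icc_subset_Icc hθ0 (by linarith)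
  have hkg : IntervalIntegrable (fun s => greenKernel a θ s * g s) volume 0 1 :=
    (((continuous_greenKernel ha).comp (.prodMk_right θ)).continuousOn.mul hg
      ).intervalIntegrable_of_Icc zero_le_one
  set c := θ ^ 3 * ((1 - (∫ t in (0 : ℝ)..1, a t) + ∫ t in θ..(1 - θ), a t) /
      (1 - ∫ t in (0 : ℝ)..1, a t))
  calc c * ((1 - 2 * θ) * (1 / 2 + θ - θ ^ 2) / 36) * m
      = ∫ s in θ..(1 - θ), c * (s * (1 - s) ^ 2 / 6) * m := by
        rw [integral_mul_const, integral_const_mul, integral_mul_one_sub_sq_div_six]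
    _ ≤ ∫ s in θ..(1 - θ), greenKernel a θ s * g s := by
        refine integral_mono_on hθ (Continuous.intervalIntegrable (by fun_prop) _ _)
          (hkg.mono_set (by rwa [uIcc_of_le hθ, uIcc_of_le zero_le_one])) fun s hs => ?_
        exact mul_le_mul (cube_mul_le_greenKernel ha ha0 hα1 hθ0 hθ (hsub hs)) (hgm s hs) hm
          (greenKernel_nonneg ha0 hα1 hθI (hsub hs))
    _ ≤ ∫ s in (0 : ℝ)..1, greenKernel a θ s * g s := by
        refine integral_mono_interval hθ0 hθ (by linarith) ?_ hkg
        filter_upwards [ae_restrict_mem measurableSet_Ioc] with s hs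
        exact mul_nonneg (greenKernel_nonneg ha0 hα1 hθI (Ioc_subset_Icc_self hs))
          (hg0 s (Ioc_subset_Icc_self hs))

end GreenKernel

theorem stmt_15_general (θ : ℝ) (hθ : θ ∈ Set.Ioo (0 : ℝ) (1 / 2)) (f a : ℝ → ℝ)
    (hf : ContinuousOn f (Set.Ici 0))
    (hf0 : ∀ v ∈ Set.Ici (0 : ℝ), 0 ≤ f v)
    (ha : ContinuousOn a (Set.Icc 0 1))
    (ha0 : ∀ t ∈ Set.Icc (0 : ℝ) 1, 0 ≤ a t)
    (hα1 : (∫ t in (0 : ℝ)..1, a t) < 1)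
    (δ ρhat : ℝ) (hδ : 0 < δ)
    (hδge : 1 ≤ δ * (θ ^ 6 / 36) *
      ((1 - (∫ t in (0 : ℝ)..1, a t) + ∫ t in θ..(1 - θ), a t) ^ 2 /
        (1 - ∫ t in (0 : ℝ)..1, a t)) *
      (1 - 2 * θ) * (1 / 2 + θ - θ ^ 2))
    (hfδ : ∀ v : ℝ, ρhat < v → δ * v ≤ f v)
    (u Au : ℝ → ℝ)
    (hu : ContinuousOn u (Set.Icc 0 1))
    (hu0 : ∀ t ∈ Set.Icc (0 : ℝ) 1, 0 ≤ u t)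
    (huK : ∀ t ∈ Set.Icc θ (1 - θ),
      θ ^ 3 * (1 - (∫ τ in (0 : ℝ)..1, a τ) + ∫ τ in θ..(1 - θ), a τ) *
        supNorm u ≤ u t)
    (hularge : ρhat ≤ θ ^ 3 *
      (1 - (∫ τ in (0 : ℝ)..1, a τ) + ∫ τ in θ..(1 - θ), a τ) * supNorm u)
    (hAu : ∀ t, Au t = ∫ s in (0 : ℝ)..1,
      (G t s + (1 / (1 - ∫ τ in (0 : ℝ)..1, a τ)) *
        ∫ τ in (0 : ℝ)..1, a τ * G τ s) * f (u s)) :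
    supNorm u ≤ supNorm Au := by
  obtain ⟨hθ0, hθ2⟩ := hθ
  have hθ1 : θ ≤ 1 - θ := by linarith
  have hIcc {s : ℝ} (hs : s ∈ Icc θ (1 - θ)) : s ∈ Icc (0 : ℝ) 1 :=
    ⟨by linarith [hs.1], by linarith [hs.2]⟩
  set α := ∫ t in (0 : ℝ)..1, a t
  set β := ∫ t in θ..(1 - θ), a t
  set N := supNorm u
  have hfu : ContinuousOn (fun s => f (u s)) (Icc 0 1) := hf.comp hu hu0
  have hβ : 0 ≤ β := integral_nonneg hθ1 fun t ht => ha0 t (hIcc ht)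
  have hm : 0 ≤ δ * (θ ^ 3 * (1 - α + β) * N) :=
    mul_nonneg hδ.le (mul_nonneg (mul_nonneg (by positivity) (by linarith)) (supNorm_nonneg u))
  have hf_lower (s : ℝ) (hs : s ∈ Icc θ (1 - θ)) : δ * (θ ^ 3 * (1 - α + β) * N) ≤ f (u s) :=
    (mul_le_mul_of_nonneg_left (huK s hs) hδ.le).trans
      (mul_le_of_forall_lt_of_continuousOn hf hfδ (hu0 s (hIcc hs)) (hularge.trans (huK s hs)))
  have hN_le : N ≤ Au θ := calc
    N ≤ δ * (θ ^ 6 / 36) * ((1 - α + β) ^ 2 / (1 - α)) * (1 - 2 * θ) * (1 / 2 + θ - θ ^ 2) * N :=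
      le_mul_of_one_le_left (supNorm_nonneg u) hδge
    _ = θ ^ 3 * ((1 - α + β) / (1 - α)) * ((1 - 2 * θ) * (1 / 2 + θ - θ ^ 2) / 36) *
          (δ * (θ ^ 3 * (1 - α + β) * N)) := by ring
    _ ≤ Au θ := (integral_greenKernel_mul_ge ha ha0 hα1 hfu (fun s hs => hf0 _ (hu0 s hs))
          hθ0.le hθ1 hm hf_lower).trans_eq (hAu θ).symm
  have hAu_cont : Continuous Au := funext hAu ▸
    continuous_integral_mul_of_continuousOn (continuous_greenKernel ha) zero_le_one hfu
  exact hN_le.trans <| (le_abs_self _).trans <|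
    abs_le_supNorm hAu_cont.continuousOn ⟨hθ0.le, by linarith⟩

theorem stmt_15 (θ : ℝ) (hθ : θ ∈ Set.Ioo (0 : ℝ) (1 / 2)) (f a : ℝ → ℝ)
    (hf : ContinuousOn f (Set.Ici 0))
    (hf0 : ∀ v ∈ Set.Ici (0 : ℝ), 0 ≤ f v)
    (ha : ContinuousOn a (Set.Icc 0 1))
    (ha0 : ∀ t ∈ Set.Icc (0 : ℝ) 1, 0 ≤ a t)
    (hα0 : 0 < ∫ t in (0 : ℝ)..1, a t)
    (hα1 : (∫ t in (0 : ℝ)..1, a t) < 1)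
    (δ ρhat : ℝ) (hδ : 0 < δ)
    (hδge : 1 ≤ δ * (θ ^ 6 / 36) *
      ((1 - (∫ t in (0 : ℝ)..1, a t) + ∫ t in θ..(1 - θ), a t) ^ 2 /
        (1 - ∫ t in (0 : ℝ)..1, a t)) *
      (1 - 2 * θ) * (1 / 2 + θ - θ ^ 2))
    (hρhat : 0 < ρhat)
    (hfδ : ∀ v : ℝ, ρhat < v → δ * v ≤ f v)
    (u Au : ℝ → ℝ)
    (hu : ContinuousOn u (Set.Icc 0 1))
    (hu0 : ∀ t ∈ Set.Icc (0 : ℝ) 1, 0 ≤ u t)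
    (huK : ∀ t ∈ Set.Icc θ (1 - θ),
      θ ^ 3 * (1 - (∫ τ in (0 : ℝ)..1, a τ) + ∫ τ in θ..(1 - θ), a τ) *
        supNorm u ≤ u t)
    (hularge : ρhat ≤ θ ^ 3 *
      (1 - (∫ τ in (0 : ℝ)..1, a τ) + ∫ τ in θ..(1 - θ), a τ) * supNorm u)
    (hAu : ∀ t, Au t = ∫ s in (0 : ℝ)..1,
      (G t s + (1 / (1 - ∫ τ in (0 : ℝ)..1, a τ)) *
        ∫ τ in (0 : ℝ)..1, a τ * G τ s) * f (u s)) :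
    supNorm u ≤ supNorm Au :=
  stmt_15_general θ hθ f a hf hf0 ha ha0 hα1 δ ρhat hδ hδge hfδ u Au hu hu0 huK hularge hAu
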